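/- Let ε ∈ (0, 1/2), let K ⊆ ℝ^d be a convex body with 0 ∈ K ⊆ d²B, and let 0 < δ < 1/(4d⁴). If Y ⊆ ∂K is a finite set such that (1 − ε/2)·Φ_δ(K) ⊆ conv(Φ_δ(Y)), then (1−ε)K ⊆ conv(Y). -/

import Mathlib

open scoped Pointwise

/-- For `δ > 0`, `φ_δ(r) = 2 / (1 + √(1 + 4δr²))`, the unique positive root of
`φ + δr²φ² = 1`. -/
noncomputable def phi (δ r : ℝ) : ℝ := 2 / (1 + Real.sqrt (1 + 4 * δ * r ^ 2))

/-- The map `Φ_δ : ℝ^d → ℝ^d`, `Φ_δ(x) = φ_δ(|x|) • x`. -/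
noncomputable def Phi (δ : ℝ) {d : ℕ} (x : EuclideanSpace ℝ (Fin d)) :
    EuclideanSpace ℝ (Fin d) := phi δ ‖x‖ • x

/-!
If `v = ∑ wᵢ zᵢ` is a convex combination and `f(zᵢ) > 0`, reweighting by `wᵢ f(zᵢ)` exhibits
`v / T` as a convex combination of the points `zᵢ / f(zᵢ)`, where `T = ∑ wᵢ f(zᵢ) ≤ f(v)` when
`f` is concave. For `f(z) = 1 - δ‖z‖²` the rescaling `z ↦ z / f(z)` inverts `Φ_δ`, because
`1 - δ‖Φ_δ(x)‖² = φ_δ(|x|)`. So every `v ∈ conv Φ_δ(Y)` has `v / T ∈ conv Y` with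
`T ≤ 1 - δ‖v‖²`. For `v = (1 - ε/2) Φ_δ(x)` with `x ∈ K` this puts `c x` in `conv Y` with
`c ≥ 1 - ε`, as long as `δ‖Φ_δ(x)‖² ≤ 1/3`, which `K ⊆ d²B` and `δ < 1/(4d⁴)` guarantee.
As `0 ∈ conv Y` (the case `x = 0`), also `(1 - ε) x ∈ conv Y`.
-/

theorem exists_inv_smul_mem_convexHull_inv_smul_image {E : Type*} [AddCommGroup E]
    [Module ℝ E] {S : Set E} {f : E → ℝ} (hf : ConcaveOn ℝ (convexHull ℝ S) f)
    (hS : ∀ z ∈ S, 0 < f z) {v : E} (hv : v ∈ convexHull ℝ S) :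
    ∃ T, 0 < T ∧ T ≤ f v ∧ T⁻¹ • v ∈ convexHull ℝ ((fun z ↦ (f z)⁻¹ • z) '' S) := by
  obtain ⟨ι, _, w, z, hw₀, hw₁, hzS, rfl⟩ := mem_convexHull_iff_exists_fintype.1 hv
  obtain ⟨j, -, hj⟩ := Finset.exists_ne_zero_of_sum_ne_zero (hw₁.trans_ne one_ne_zero)
  have hμ₀ : ∀ i ∈ Finset.univ, 0 ≤ w i * f (z i) :=
    fun i _ ↦ mul_nonneg (hw₀ i) (hS _ (hzS i)).le
  have hT : 0 < ∑ i, w i * f (z i) :=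
    Finset.sum_pos' hμ₀ ⟨j, Finset.mem_univ j, mul_pos ((hw₀ j).lt_of_ne' hj) (hS _ (hzS j))⟩
  refine ⟨_, hT, ?_, ?_⟩
  · simpa only [smul_eq_mul] using
      hf.le_map_sum (fun i _ ↦ hw₀ i) hw₁ fun i _ ↦ subset_convexHull ℝ S (hzS i)
  · have hsum : ∑ i, (w i * f (z i)) • (f (z i))⁻¹ • z i = ∑ i, w i • z i :=
      Finset.sum_congr rfl fun i _ ↦ by
        rw [smul_smul, mul_assoc, mul_inv_cancel₀ (hS _ (hzS i)).ne', mul_one]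
    have := Finset.univ.centerMass_mem_convexHull (E := E) hμ₀ hT
      fun i _ ↦ Set.mem_image_of_mem (fun z ↦ (f z)⁻¹ • z) (hzS i)
    rwa [Finset.centerMass, hsum] at this

theorem concaveOn_one_sub_mul_norm_sq {E : Type*} [SeminormedAddCommGroup E] [NormedSpace ℝ E]
    {δ : ℝ} (hδ : 0 ≤ δ) : ConcaveOn ℝ Set.univ fun z : E ↦ 1 - δ * ‖z‖ ^ 2 := by
  have := ((convexOn_univ_norm (E := E)).pow (fun x _ ↦ norm_nonneg x) 2).smul hδ
  exact (concaveOn_const 1 convex_univ).sub this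

theorem Convex.smul_mem_of_smul_mem_of_le {E : Type*} [AddCommGroup E] [Module ℝ E] {s : Set E}
    (hs : Convex ℝ s) (h0 : (0 : E) ∈ s) {x : E} {c t : ℝ} (hcx : c • x ∈ s) (ht : 0 ≤ t)
    (htc : t ≤ c) : t • x ∈ s := by
  rcases ht.eq_or_lt with rfl | ht
  · rwa [zero_smul]
  have hc : 0 < c := ht.trans_le htc
  have := hs.smul_mem_of_zero_mem h0 hcx ⟨div_nonneg ht.le hc.le, (div_le_one hc).2 htc⟩
  rwa [smul_smul, div_mul_cancel₀ _ hc.ne'] at this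

section Phi

variable {δ : ℝ} {d : ℕ}

theorem phi_pos (r : ℝ) : 0 < phi δ r := by
  unfold phi; positivity

theorem phi_add_mul_sq_mul_phi_sq_eq_one (hδ : 0 ≤ δ) (r : ℝ) :
    phi δ r + δ * r ^ 2 * phi δ r ^ 2 = 1 := by
  have hsq : Real.sqrt (1 + 4 * δ * r ^ 2) ^ 2 = 1 + 4 * δ * r ^ 2 :=
    Real.sq_sqrt (by positivity)
  have : 0 ≤ Real.sqrt (1 + 4 * δ * r ^ 2) := Real.sqrt_nonneg _
  unfold phi
  field_simp
  nlinarith [hsq]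

theorem phi_le_one (hδ : 0 ≤ δ) (r : ℝ) : phi δ r ≤ 1 := by
  nlinarith [phi_add_mul_sq_mul_phi_sq_eq_one hδ r, sq_nonneg (r * phi δ r)]

theorem norm_Phi (x : EuclideanSpace ℝ (Fin d)) :
    ‖Phi δ x‖ = phi δ ‖x‖ * ‖x‖ := by
  rw [Phi, norm_smul, Real.norm_of_nonneg (phi_pos _).le]

theorem norm_Phi_le (hδ : 0 ≤ δ) (x : EuclideanSpace ℝ (Fin d)) : ‖Phi δ x‖ ≤ ‖x‖ := by
  rw [norm_Phi]
  exact mul_le_of_le_one_left (norm_nonneg x) (phi_le_one hδ _)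

theorem one_sub_mul_norm_Phi_sq (hδ : 0 ≤ δ) (x : EuclideanSpace ℝ (Fin d)) :
    1 - δ * ‖Phi δ x‖ ^ 2 = phi δ ‖x‖ := by
  rw [norm_Phi]
  linarith [phi_add_mul_sq_mul_phi_sq_eq_one hδ ‖x‖]

theorem image_inv_smul_image_Phi (hδ : 0 ≤ δ) (Y : Set (EuclideanSpace ℝ (Fin d))) :
    (fun z ↦ (1 - δ * ‖z‖ ^ 2)⁻¹ • z) '' (Phi δ '' Y) = Y := by
  rw [Set.image_image]
  refine (Set.image_congr fun x _ ↦ ?_).trans (Set.image_id Y)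
  rw [one_sub_mul_norm_Phi_sq hδ, Phi, inv_smul_smul₀ (phi_pos _).ne', id]

theorem exists_inv_smul_mem_convexHull_of_mem_convexHull_image_Phi (hδ : 0 ≤ δ)
    {Y : Set (EuclideanSpace ℝ (Fin d))} {v : EuclideanSpace ℝ (Fin d)}
    (hv : v ∈ convexHull ℝ (Phi δ '' Y)) :
    ∃ T, 0 < T ∧ T ≤ 1 - δ * ‖v‖ ^ 2 ∧ T⁻¹ • v ∈ convexHull ℝ Y := by
  have hpos : ∀ z ∈ Phi δ '' Y, 0 < 1 - δ * ‖z‖ ^ 2 := by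
    rintro _ ⟨x, -, rfl⟩
    rw [one_sub_mul_norm_Phi_sq hδ]
    exact phi_pos _
  have := exists_inv_smul_mem_convexHull_inv_smul_image
    ((concaveOn_one_sub_mul_norm_sq hδ).subset (Set.subset_univ _) (convex_convexHull ℝ _))
    hpos hv
  rwa [image_inv_smul_image_Phi hδ] at this

end Phi

theorem one_sub_le_inv_mul_of_le {ε a T : ℝ} (hε₀ : 0 ≤ ε) (hε₁ : ε ≤ 1) (ha₀ : 0 ≤ a)
    (ha : a ≤ 1 / 3) (hT₀ : 0 < T) (hT : T ≤ 1 - (1 - ε / 2) ^ 2 * a) :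
    1 - ε ≤ T⁻¹ * ((1 - ε / 2) * (1 - a)) := by
  rw [inv_mul_eq_div, le_div_iff₀ hT₀]
  -- the difference `(1 - ε/2)(1 - a) - (1 - ε)(1 - (1 - ε/2)²a)` is `(ε/2)(1 - (1 - ε/2)(3 - ε)a)`
  nlinarith [mul_le_mul_of_nonneg_left hT (by linarith : 0 ≤ 1 - ε),
    mul_nonneg hε₀ (by linarith : 0 ≤ 1 - 3 * a),
    mul_nonneg (mul_nonneg ha₀ (sq_nonneg ε)) (by linarith : (0:ℝ) ≤ 5 - ε)]

theorem stmt7_general (d : ℕ) (ε δ : ℝ) (hε : 0 < ε) (hε2 : ε < 1 / 2)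
    (K : Set (EuclideanSpace ℝ (Fin d)))
    (h0 : (0 : EuclideanSpace ℝ (Fin d)) ∈ K)
    (hKB : K ⊆ Metric.closedBall 0 ((d : ℝ) ^ 2))
    (hδ : 0 < δ) (hδ2 : δ < 1 / (4 * (d : ℝ) ^ 4))
    (Y : Set (EuclideanSpace ℝ (Fin d)))
    (hsub : (1 - ε / 2) • (Phi δ '' K) ⊆ convexHull ℝ (Phi δ '' Y)) :
    (1 - ε) • K ⊆ convexHull ℝ Y := by
  have hδd : δ * (d : ℝ) ^ 4 ≤ 1 / 4 := by
    rcases (by positivity : (0 : ℝ) ≤ d ^ 4).eq_or_lt with hd | hd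
    · rw [← hd]; norm_num
    · rw [lt_div_iff₀ (by positivity)] at hδ2; linarith
  have hK : ∀ x ∈ K, δ * ‖Phi δ x‖ ^ 2 ≤ 1 / 4 := fun x hx ↦ by
    have hx : ‖x‖ ≤ d ^ 2 := by simpa using hKB hx
    calc δ * ‖Phi δ x‖ ^ 2 ≤ δ * ((d : ℝ) ^ 2) ^ 2 := by
          gcongr; exact (norm_Phi_le hδ.le x).trans hx
      _ ≤ 1 / 4 := by rw [← pow_mul]; exact hδd
  have hmem : ∀ x ∈ K, ∃ T, 0 < T ∧ T ≤ 1 - δ * ‖(1 - ε / 2) • Phi δ x‖ ^ 2 ∧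
      T⁻¹ • (1 - ε / 2) • Phi δ x ∈ convexHull ℝ Y := fun x hx ↦
    exists_inv_smul_mem_convexHull_of_mem_convexHull_image_Phi hδ.le
      (hsub (Set.smul_mem_smul_set (Set.mem_image_of_mem _ hx)))
  have h0Y : (0 : EuclideanSpace ℝ (Fin d)) ∈ convexHull ℝ Y := by
    obtain ⟨T, -, -, hT⟩ := hmem 0 h0
    simpa [Phi] using hT
  rintro _ ⟨x, hx, rfl⟩
  obtain ⟨T, hT₀, hT, hTx⟩ := hmem x hx
  rw [norm_smul, mul_pow, Real.norm_of_nonneg (by linarith), ← mul_assoc, mul_comm δ,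
    mul_assoc] at hT
  refine (convex_convexHull ℝ Y).smul_mem_of_smul_mem_of_le h0Y ?_ (by linarith)
    (one_sub_le_inv_mul_of_le hε.le (by linarith) (by positivity) (by linarith [hK x hx]) hT₀ hT)
  rwa [one_sub_mul_norm_Phi_sq hδ.le, mul_smul, mul_smul]

/-- Let `ε ∈ (0,1/2)`, let `K ⊆ ℝ^d` be a convex body with `0 ∈ K ⊆ d²B`, and let
`0 < δ < 1/(4d⁴)`. If `Y ⊆ ∂K` is a finite set with
`(1 - ε/2)·Φ_δ(K) ⊆ conv(Φ_δ(Y))`, then `(1-ε)K ⊆ conv(Y)`. -/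
theorem stmt7 (d : ℕ) (ε δ : ℝ) (hε : 0 < ε) (hε2 : ε < 1 / 2)
    (K : Set (EuclideanSpace ℝ (Fin d)))
    (hKcomp : IsCompact K) (hKconv : Convex ℝ K) (hKint : (interior K).Nonempty)
    (h0 : (0 : EuclideanSpace ℝ (Fin d)) ∈ K)
    (hKB : K ⊆ Metric.closedBall 0 ((d : ℝ) ^ 2))
    (hδ : 0 < δ) (hδ2 : δ < 1 / (4 * (d : ℝ) ^ 4))
    (Y : Set (EuclideanSpace ℝ (Fin d))) (hYfin : Y.Finite) (hY : Y ⊆ frontier K)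
    (hsub : (1 - ε / 2) • (Phi δ '' K) ⊆ convexHull ℝ (Phi δ '' Y)) :
    (1 - ε) • K ⊆ convexHull ℝ Y :=
  stmt7_general d ε δ hε hε2 K h0 hKB hδ hδ2 Y hsub
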